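/- arXiv:1403.5913 — 3 statements merged into one kernel-verified Lean document; each statement's English description precedes it below -/
import Mathlib

section
/- Suppose an n-arm b₁,…,bₙ in ℝ³ satisfies the parallel condition for all r = 2,…,n, i.e. (b₂+…+b_{r-1}) − (b_{r+1}+…+bₙ) ∈ ℝ·b₁ for each r. If n is odd, then b_r ∈ ℝ·b₁ for all r = 2,…,n (the arm is aligned). -/
/-!
Modulo the line `ℝ ∙ b₁`, subtracting consecutive parallel conditions `P_r` and `P_{r+1}` gives
`b_r + b_{r+1} ≡ 0`, so the classes of `b₂, …, bₙ` alternate in sign, while `P₂` says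
`b₃ + ⋯ + bₙ ≡ 0`. For `n` odd that sum has an odd number of terms, so after cancelling the
pairs `b₄ + b₅, …, b_{n-1} + bₙ` it reduces to `b₃ ≡ 0`, and then every `b_r ≡ 0`.
-/

open Finset

section AlternatingChain

variable {G : Type*} [AddCommGroup G] (H : AddSubgroup G) {c : ℕ → G} {a n : ℕ}

theorem AddSubgroup.mem_iff_of_add_succ_mem (hpair : ∀ s, a ≤ s → s < n → c s + c (s + 1) ∈ H)
    {r : ℕ} (har : a ≤ r) (hrn : r ≤ n) : c r ∈ H ↔ c a ∈ H := by
  induction r, har using Nat.le_induction with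
  | base => rfl
  | succ r har ih =>
    rw [← ih (by omega)]
    have hsum := hpair r har (by omega)
    constructor
    · intro hsucc
      simpa using H.sub_mem hsum hsucc
    · intro hr
      simpa using H.sub_mem hsum hr

theorem AddSubgroup.sum_Ico_mem_of_add_succ_mem
    (hpair : ∀ s, a ≤ s → s < n → c s + c (s + 1) ∈ H) (k : ℕ) :
    ∀ s, a ≤ s → s + 2 * k ≤ n + 1 → ∑ i ∈ Ico s (s + 2 * k), c i ∈ H := by
  induction k with
  | zero => simp
  | succ k ih =>
    intro s has hsn
    rw [show s + 2 * (k + 1) = s + 2 * k + 1 + 1 by ring,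
      sum_Ico_succ_top (by omega), sum_Ico_succ_top (by omega), add_assoc]
    exact H.add_mem (ih s has (by omega)) (hpair _ (by omega) (by omega))

end AlternatingChain

theorem Finset.sum_Icc_eq_add_sum_Icc_succ {M : Type*} [AddCommMonoid M] (f : ℕ → M) {a b : ℕ}
    (hab : a ≤ b) : ∑ i ∈ Icc a b, f i = f a + ∑ i ∈ Icc (a + 1) b, f i := by
  rw [← add_sum_Ioc_eq_sum_Icc hab, Icc_add_one_left_eq_Ioc]

section ParallelCondition

variable {V : Type*} [AddCommGroup V] (b : ℕ → V) (n : ℕ)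

/-- The vector `(b₂ + ⋯ + b_{r-1}) - (b_{r+1} + ⋯ + bₙ)` that `P_r` requires to lie on `ℝ ∙ b₁`. -/
def parallelDefect (r : ℕ) : V :=
  (∑ i ∈ Icc 2 (r - 1), b i) - ∑ i ∈ Icc (r + 1) n, b i

theorem parallelDefect_two : parallelDefect b n 2 = -∑ i ∈ Icc 3 n, b i := by
  simp [parallelDefect]

theorem parallelDefect_succ_sub {r : ℕ} (h2r : 2 ≤ r) (hrn : r < n) :
    parallelDefect b n (r + 1) - parallelDefect b n r = b r + b (r + 1) := by
  obtain ⟨k, rfl⟩ : ∃ k, r = k + 1 := ⟨r - 1, by omega⟩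
  have hhead : ∑ i ∈ Icc 2 (k + 1), b i = ∑ i ∈ Icc 2 k, b i + b (k + 1) :=
    sum_Icc_succ_top (by omega) b
  have htail := sum_Icc_eq_add_sum_Icc_succ b (show k + 1 + 1 ≤ n by omega)
  simp only [parallelDefect, Nat.add_sub_cancel, hhead, htail]
  abel

end ParallelCondition

theorem stmt_9_general (n : ℕ) (hn : Odd n) (b : ℕ → Fin 3 → ℝ)
    (hpar : ∀ r ∈ Finset.Icc 2 n, ∃ t : ℝ,
      (∑ i ∈ Finset.Icc 2 (r - 1), b i) - (∑ i ∈ Finset.Icc (r + 1) n, b i) = t • b 1) :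
    ∀ r ∈ Finset.Icc 2 n, ∃ t : ℝ, b r = t • b 1 := by
  intro r hr
  rw [mem_Icc] at hr
  obtain ⟨m, rfl⟩ := hn
  set H := (ℝ ∙ b 1).toAddSubgroup
  have hmem (x : Fin 3 → ℝ) : x ∈ H ↔ ∃ t : ℝ, x = t • b 1 := by
    simp only [H, Submodule.mem_toAddSubgroup, Submodule.mem_span_singleton, eq_comm]
  have hdefect (s : ℕ) (h2s : 2 ≤ s) (hsn : s ≤ 2 * m + 1) : parallelDefect b (2 * m + 1) s ∈ H :=
    (hmem _).2 (hpar s (mem_Icc.2 ⟨h2s, hsn⟩))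
  have hpair (s : ℕ) (h2s : 2 ≤ s) (hsn : s < 2 * m + 1) : b s + b (s + 1) ∈ H := by
    rw [← parallelDefect_succ_sub b _ h2s hsn]
    exact H.sub_mem (hdefect _ (by omega) hsn) (hdefect _ h2s hsn.le)
  have hsum3 : ∑ i ∈ Icc 3 (2 * m + 1), b i ∈ H := by
    simpa [parallelDefect_two] using hdefect 2 le_rfl (by omega)
  have hsum4 : ∑ i ∈ Icc 4 (2 * m + 1), b i ∈ H := by
    have := H.sum_Ico_mem_of_add_succ_mem hpair (m - 1) 4 (by omega) (by omega)
    rwa [show 4 + 2 * (m - 1) = 2 * m + 1 + 1 by omega, Ico_add_one_right_eq_Icc] at this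
  have hb3 : b 3 ∈ H := by
    rw [sum_Icc_eq_add_sum_Icc_succ b (by omega)] at hsum3
    exact (H.add_mem_cancel_right hsum4).1 hsum3
  rw [← hmem, H.mem_iff_of_add_succ_mem hpair hr.1 hr.2,
    ← H.mem_iff_of_add_succ_mem hpair (r := 3) (by omega) (by omega)]
  exact hb3

/-- If an `n`-arm (`n` odd) satisfies the parallel condition `P_r` for all
`r = 2, …, n`, then every `b_r` (`2 ≤ r ≤ n`) is a scalar multiple of `b₁`. -/
theorem stmt_9 (n : ℕ) (hn : Odd n) (b : ℕ → Fin 3 → ℝ) (hb : b 1 ≠ 0)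
    (hpar : ∀ r ∈ Finset.Icc 2 n, ∃ t : ℝ,
      (∑ i ∈ Finset.Icc 2 (r - 1), b i) - (∑ i ∈ Finset.Icc (r + 1) n, b i) = t • b 1) :
    ∀ r ∈ Finset.Icc 2 n, ∃ t : ℝ, b r = t • b 1 :=
  stmt_9_general n hn b hpar
end

section
/- Suppose for each r = 2,…,n the arm vectors satisfy b_r^⊥ ⊥ ((b₂+…+b_{r-1}) − (b_{r+1}+…+bₙ))^⊥ where v^⊥ denotes the component of v orthogonal to b₁. Then for each r, (b₂^⊥ + … + b_{r-1}^⊥) ⊥ (b_r^⊥ + … + bₙ^⊥). -/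
/-!
Induction on `r`, writing `S` for the prefix sum before `r` and `T` for the suffix sum after `r`:
`(S + x r) ⬝ᵥ T = S ⬝ᵥ (x r + T) - x r ⬝ᵥ (S - T)`, where the first term vanishes by the
induction hypothesis and the second by the hypothesis at `r`.
-/

open Finset

theorem sum_Ico_dotProduct_sum_Icc_eq_zero {m R : Type*} [Fintype m] [CommRing R]
    (x : ℕ → m → R) {a n : ℕ}
    (h : ∀ r ∈ Icc a n, x r ⬝ᵥ (∑ i ∈ Ico a r, x i - ∑ i ∈ Ioc r n, x i) = 0) :
    ∀ r ∈ Icc a n, (∑ i ∈ Ico a r, x i) ⬝ᵥ ∑ i ∈ Icc r n, x i = 0 := by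
  intro r hr
  obtain ⟨har, hrn⟩ := mem_Icc.mp hr
  induction r, har using Nat.le_induction with
  | base => simp
  | succ r har ih =>
    have hr : r ∈ Icc a n := mem_Icc.mpr ⟨har, by omega⟩
    set S := ∑ i ∈ Ico a r, x i
    set T := ∑ i ∈ Ioc r n, x i
    have hprev : S ⬝ᵥ (x r + T) = 0 := by
      rw [add_sum_Ioc_eq_sum_Icc (by omega)]
      exact ih hr (by omega)
    rw [sum_Ico_succ_top har, Icc_add_one_left_eq_Ioc]
    calc (S + x r) ⬝ᵥ T = S ⬝ᵥ (x r + T) - x r ⬝ᵥ (S - T) := by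
          simp only [add_dotProduct, dotProduct_add, dotProduct_sub, dotProduct_comm (x r) S]
          ring
      _ = 0 := by rw [hprev, h r hr, sub_zero]

theorem stmt_11_general (n : ℕ) (b : ℕ → Fin 3 → ℝ)
    (perp : (Fin 3 → ℝ) → (Fin 3 → ℝ))
    (h : ∀ r ∈ Finset.Icc 2 n,
      perp (b r) ⬝ᵥ ((∑ i ∈ Finset.Icc 2 (r - 1), perp (b i)) -
        ∑ i ∈ Finset.Icc (r + 1) n, perp (b i)) = 0) :
    ∀ r ∈ Finset.Icc 2 n,
      (∑ i ∈ Finset.Icc 2 (r - 1), perp (b i)) ⬝ᵥ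
        (∑ i ∈ Finset.Icc r n, perp (b i)) = 0 := by
  have hIco : ∀ r ∈ Icc 2 n, Icc 2 (r - 1) = Ico 2 r := fun r hr =>
    Icc_sub_one_right_eq_Ico_of_not_isMin (by simp at hr ⊢; omega) 2
  intro r hr
  rw [hIco r hr]
  refine sum_Ico_dotProduct_sum_Icc_eq_zero (fun i => perp (b i)) (fun s hs => ?_) r hr
  rw [← hIco s hs, ← Icc_add_one_left_eq_Ioc]
  exact h s hs

/-- Writing `v^⊥ = v - (⟨v,b₁⟩/⟨b₁,b₁⟩)·b₁` for the component of `v` orthogonal to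
`b₁`, if `b_r^⊥ ⊥ (b₂^⊥+⋯+b_{r-1}^⊥) − (b_{r+1}^⊥+⋯+bₙ^⊥)` for every `r = 2, …, n`,
then `(b₂^⊥+⋯+b_{r-1}^⊥) ⊥ (b_r^⊥+⋯+bₙ^⊥)` for every such `r`. -/
theorem stmt_11 (n : ℕ) (b : ℕ → Fin 3 → ℝ) (b₁ : Fin 3 → ℝ) (hb : b₁ ≠ 0)
    (perp : (Fin 3 → ℝ) → (Fin 3 → ℝ))
    (hperp : ∀ v, perp v = v - ((v ⬝ᵥ b₁) / (b₁ ⬝ᵥ b₁)) • b₁)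
    (h : ∀ r ∈ Finset.Icc 2 n,
      perp (b r) ⬝ᵥ ((∑ i ∈ Finset.Icc 2 (r - 1), perp (b i)) -
        ∑ i ∈ Finset.Icc (r + 1) n, perp (b i)) = 0) :
    ∀ r ∈ Finset.Icc 2 n,
      (∑ i ∈ Finset.Icc 2 (r - 1), perp (b i)) ⬝ᵥ
        (∑ i ∈ Finset.Icc r n, perp (b i)) = 0 :=
  stmt_11_general n b perp h
end

section
/- At each of the four points (bc,ac,ab), (−bc,ac,−ab), (−bc,−ac,ab), (bc,−ac,−ab) with a,b,c > 0, the Hessian of F(x,y,z) = 2xyz − a²x² − b²y² − c²z² + a²b²c² is nondegenerate and has exactly two negative eigenvalues and one positive eigenvalue (Morse index 2). -/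
/-!
The Hessian has trace `-2(a² + b² + c²) < 0`, and at each of the four points its determinant is
`32 a²b²c² > 0`. For a real symmetric `3 × 3` matrix the determinant is the product of the
eigenvalues, so a positive determinant forces an even number of negative eigenvalues, and a negative
trace excludes there being none: two are negative and one is positive.
-/

open Matrix

theorem card_neg_eq_two_and_card_pos_eq_one_of_prod_pos_of_sum_neg (e : Fin 3 → ℝ)
    (hprod : 0 < ∏ i, e i) (hsum : ∑ i, e i < 0) :
    (Finset.univ.filter fun i => e i < 0).card = 2 ∧
      (Finset.univ.filter fun i => 0 < e i).card = 1 := by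
  rw [Fin.prod_univ_three] at hprod
  rw [Fin.sum_univ_three] at hsum
  simp only [Finset.card_filter, Fin.sum_univ_three]
  have hne : e 0 ≠ 0 ∧ e 1 ≠ 0 ∧ e 2 ≠ 0 := by
    simpa only [mul_ne_zero_iff, and_assoc] using hprod.ne'
  obtain ⟨h0 | h0, h1 | h1, h2 | h2⟩ :=
    And.imp Ne.lt_or_gt (And.imp Ne.lt_or_gt Ne.lt_or_gt) hne <;>
  simp [mul_pos_iff, mul_neg_iff, h0, h1, h2, h0.asymm, h1.asymm, h2.asymm] at hprod ⊢
  linarith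

theorem Matrix.IsHermitian.card_eigenvalues_neg_eq_two_of_det_pos_of_trace_neg
    {A : Matrix (Fin 3) (Fin 3) ℝ} (hA : A.IsHermitian) (hdet : 0 < A.det) (htr : A.trace < 0) :
    (Finset.univ.filter fun i => hA.eigenvalues i < 0).card = 2 ∧
      (Finset.univ.filter fun i => 0 < hA.eigenvalues i).card = 1 := by
  rw [hA.det_eq_prod_eigenvalues] at hdet
  rw [hA.trace_eq_sum_eigenvalues] at htr
  exact card_neg_eq_two_and_card_pos_eq_one_of_prod_pos_of_sum_neg _ hdet htr

theorem det_hessian_gram_det (a b c x y z : ℝ) :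
    ((2 : ℝ) • !![-a ^ 2, z, y; z, -b ^ 2, x; y, x, -c ^ 2]).det =
      8 * (2 * x * y * z + a ^ 2 * x ^ 2 + b ^ 2 * y ^ 2 + c ^ 2 * z ^ 2 - a ^ 2 * b ^ 2 * c ^ 2) := by
  simp only [smul_of, smul_cons, smul_eq_mul, mul_neg, smul_empty, det_fin_three, Fin.isValue,
    of_apply, cons_val', cons_val_zero, cons_val_fin_one, cons_val_one, neg_mul, neg_neg, cons_val,
    sub_neg_eq_add]
  ring

theorem trace_hessian_gram_det (a b c x y z : ℝ) :
    ((2 : ℝ) • !![-a ^ 2, z, y; z, -b ^ 2, x; y, x, -c ^ 2]).trace =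
      -2 * (a ^ 2 + b ^ 2 + c ^ 2) := by
  simp only [smul_of, smul_cons, smul_eq_mul, mul_neg, smul_empty, trace_fin_three, Fin.isValue,
    of_apply, cons_val', cons_val_zero, cons_val_fin_one, cons_val_one, cons_val, neg_mul]
  ring

theorem det_hessian_gram_det_at_critical_point {a b c x y z : ℝ}
    (hpt : (x, y, z) = (b * c, a * c, a * b) ∨ (x, y, z) = (-(b * c), a * c, -(a * b)) ∨
      (x, y, z) = (-(b * c), -(a * c), a * b) ∨ (x, y, z) = (b * c, -(a * c), -(a * b))) :
    ((2 : ℝ) • !![-a ^ 2, z, y; z, -b ^ 2, x; y, x, -c ^ 2]).det = 32 * (a * b * c) ^ 2 := by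
  rw [det_hessian_gram_det]
  simp only [Prod.mk.injEq] at hpt
  rcases hpt with ⟨rfl, rfl, rfl⟩ | ⟨rfl, rfl, rfl⟩ | ⟨rfl, rfl, rfl⟩ | ⟨rfl, rfl, rfl⟩ <;> ring

/-- At each of the four points `(bc,ac,ab)`, `(−bc,ac,−ab)`, `(−bc,−ac,ab)`,
`(bc,−ac,−ab)` the Hessian `2·[[−a², z, y],[z, −b², x],[y, x, −c²]]` of
`F(x,y,z) = 2xyz − a²x² − b²y² − c²z² + a²b²c²` is nondegenerate and has exactly
two negative and one positive eigenvalue (Morse index 2). -/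
theorem stmt_17 (a b c : ℝ) (ha : 0 < a) (hb : 0 < b) (hc : 0 < c) :
    ∀ x y z : ℝ,
      ((x, y, z) = (b * c, a * c, a * b) ∨ (x, y, z) = (-(b * c), a * c, -(a * b)) ∨
        (x, y, z) = (-(b * c), -(a * c), a * b) ∨
        (x, y, z) = (b * c, -(a * c), -(a * b))) →
      ∀ M : Matrix (Fin 3) (Fin 3) ℝ,
        M = (2 : ℝ) • !![-a ^ 2, z, y; z, -b ^ 2, x; y, x, -c ^ 2] →
        M.det ≠ 0 ∧
          ∀ hM : M.IsHermitian,
            (Finset.univ.filter fun i => hM.eigenvalues i < 0).card = 2 ∧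
            (Finset.univ.filter fun i => 0 < hM.eigenvalues i).card = 1 := by
  intro x y z hpt M hM
  subst hM
  have hdet : 0 < ((2 : ℝ) • !![-a ^ 2, z, y; z, -b ^ 2, x; y, x, -c ^ 2]).det := by
    rw [det_hessian_gram_det_at_critical_point hpt]
    positivity
  have htr : ((2 : ℝ) • !![-a ^ 2, z, y; z, -b ^ 2, x; y, x, -c ^ 2]).trace < 0 := by
    rw [trace_hessian_gram_det]
    nlinarith [sq_pos_of_pos ha, sq_nonneg b, sq_nonneg c]
  exact ⟨hdet.ne', fun hM => hM.card_eigenvalues_neg_eq_two_of_det_pos_of_trace_neg hdet htr⟩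
end
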